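/- arXiv:2206.02372 — 3 statements merged into one kernel-verified Lean document; each statement's English description precedes it below -/
import Mathlib

section
/- Let n ≥ 2 and r ≥ 1 be integers, let χ_1, …, χ_n be integers, let k_1, …, k_{n−1} be integers, and let w_1, …, w_n be rational numbers with 0 < w_i < 1 for each i and Σ_{i=1}^n w_i = 1. Set χ = Σ_{i=1}^n χ_i − (n−1)r. Assume (as rational numbers): χ_1 ≤ w_1·χ + k_1, χ_n ≤ w_n·χ + r, and χ_l ≤ w_l·χ + r + k_l for every l with 2 ≤ l ≤ n−1. Then for every j with 1 ≤ j ≤ n−1 one has (Σ_{i=1}^j w_i)·χ − Σ_{i=1}^{j−1} χ_i − Σ_{i=j+1}^{n−1} k_i + (j−1)r ≤ χ_j ≤ (Σ_{i=1}^j w_i)·χ − Σ_{i=1}^{j−1} χ_i + Σ_{i=1}^j k_i + (j−1)r. -/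
/-!
Adding up the hypotheses for the first `j` components bounds `χ_1 + ⋯ + χ_j` from above, which
is the upper bound. Adding them up for the last `n - j` components bounds `χ_{j+1} + ⋯ + χ_n`
from above; since `χ_1 + ⋯ + χ_n = χ + (n - 1) r` and `w_1 + ⋯ + w_n = 1`, this is the lower bound.
-/

open Finset

theorem sum_Icc_one_add_sum_Ioc {M : Type*} [AddCommMonoid M] (f : ℕ → M) {j n : ℕ}
    (hjn : j ≤ n) : ∑ i ∈ Icc 1 j, f i + ∑ i ∈ Ioc j n, f i = ∑ i ∈ Icc 1 n, f i := by
  have hIcc : ∀ m, Icc 1 m = Ioc 0 m := Icc_add_one_left_eq_Ioc 0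
  rw [hIcc, hIcc, sum_Ioc_consecutive f (Nat.zero_le j) hjn]

section

variable {α : Type*} [CommRing α] [LinearOrder α] [IsStrictOrderedRing α]
  {a b c : ℕ → α} {r : α}

theorem sum_Ioc_le_of_le_add {p q : ℕ} (hpq : p ≤ q)
    (h : ∀ l, p < l → l ≤ q → a l ≤ b l + r + c l) :
    ∑ i ∈ Ioc p q, a i ≤ ∑ i ∈ Ioc p q, b i + ∑ i ∈ Ioc p q, c i + ((q : α) - p) * r := by
  have hsum : ∑ i ∈ Ioc p q, a i ≤ ∑ i ∈ Ioc p q, (b i + r + c i) :=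
    sum_le_sum fun l hl ↦ h l (mem_Ioc.1 hl).1 (mem_Ioc.1 hl).2
  simpa [sum_add_distrib, Nat.cast_sub hpq, add_right_comm] using hsum

theorem sum_Icc_one_le_of_le_add {j : ℕ} (hj : 1 ≤ j) (h1 : a 1 ≤ b 1 + c 1)
    (h : ∀ l, 2 ≤ l → l ≤ j → a l ≤ b l + r + c l) :
    ∑ i ∈ Icc 1 j, a i ≤ ∑ i ∈ Icc 1 j, b i + ∑ i ∈ Icc 1 j, c i + ((j : α) - 1) * r := by
  have hrest := sum_Ioc_le_of_le_add hj fun l hl hlj ↦ h l hl hlj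
  rw [Nat.cast_one] at hrest
  simp only [← add_sum_Ioc_eq_sum_Icc hj]
  linarith

theorem sum_Ioc_succ_le_of_le_add {j m : ℕ} (hjm : j ≤ m) (hlast : a (m + 1) ≤ b (m + 1) + r)
    (h : ∀ l, j < l → l ≤ m → a l ≤ b l + r + c l) :
    ∑ i ∈ Ioc j (m + 1), a i ≤
      ∑ i ∈ Ioc j (m + 1), b i + ∑ i ∈ Ioc j m, c i + ((m : α) + 1 - j) * r := by
  have hrest := sum_Ioc_le_of_le_add hjm h
  rw [sum_Ioc_succ_top hjm, sum_Ioc_succ_top hjm]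
  linarith

end

theorem stmt_0_general (n : ℕ) (r : ℤ)
    (χ k : ℕ → ℤ) (w : ℕ → ℚ)
    (hwsum : ∑ i ∈ Finset.Icc 1 n, w i = 1)
    (X : ℚ) (hX : X = (∑ i ∈ Finset.Icc 1 n, (χ i : ℚ)) - ((n : ℚ) - 1) * (r : ℚ))
    (h1 : (χ 1 : ℚ) ≤ w 1 * X + (k 1 : ℚ))
    (hlast : (χ n : ℚ) ≤ w n * X + (r : ℚ))
    (hmid : ∀ l, 2 ≤ l → l ≤ n - 1 → (χ l : ℚ) ≤ w l * X + (r : ℚ) + (k l : ℚ)) :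
    ∀ j, 1 ≤ j → j ≤ n - 1 →
      ((∑ i ∈ Finset.Icc 1 j, w i) * X - (∑ i ∈ Finset.Icc 1 (j - 1), (χ i : ℚ))
          - (∑ i ∈ Finset.Icc (j + 1) (n - 1), (k i : ℚ)) + ((j : ℚ) - 1) * (r : ℚ)
        ≤ (χ j : ℚ)) ∧
      ((χ j : ℚ) ≤ (∑ i ∈ Finset.Icc 1 j, w i) * X - (∑ i ∈ Finset.Icc 1 (j - 1), (χ i : ℚ))
          + (∑ i ∈ Finset.Icc 1 j, (k i : ℚ)) + ((j : ℚ) - 1) * (r : ℚ)) := by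
  intro j hj hjn
  obtain ⟨m, rfl⟩ : ∃ m, n = m + 1 := ⟨n - 1, by omega⟩
  obtain ⟨i, rfl⟩ : ∃ i, j = i + 1 := ⟨j - 1, by omega⟩
  simp only [Nat.add_sub_cancel, Icc_add_one_left_eq_Ioc] at hmid hjn ⊢
  have hprefix := sum_Icc_one_le_of_le_add (a := fun l ↦ (χ l : ℚ)) (b := fun l ↦ w l * X)
    (c := fun l ↦ (k l : ℚ)) hj h1 fun l hl hli ↦ hmid l hl (by omega)
  have hsuffix := sum_Ioc_succ_le_of_le_add (a := fun l ↦ (χ l : ℚ)) (b := fun l ↦ w l * X)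
    (c := fun l ↦ (k l : ℚ)) hjn hlast fun l hil hl ↦ hmid l (by omega) hl
  have hχ := sum_Icc_one_add_sum_Ioc (fun l ↦ (χ l : ℚ)) (by omega : i + 1 ≤ m + 1)
  have hw := sum_Icc_one_add_sum_Ioc w (by omega : i + 1 ≤ m + 1)
  rw [sum_Icc_succ_top hj] at hprefix hχ
  simp only [← sum_mul] at hprefix hsuffix
  push_cast at hX hprefix hsuffix ⊢
  constructor
  · linear_combination hsuffix + X * hw + X * hwsum - hχ + hX
  · linear_combination hprefix

/-- Arithmetic core of Theorem 3.5 (semistable version): the slope inequalities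
`μ_w(K̃_i) ≤ μ_w(E)` imply the bounds on each `χ_j`. -/
theorem stmt_0 (n : ℕ) (r : ℤ) (hn : 2 ≤ n) (hr : 1 ≤ r)
    (χ k : ℕ → ℤ) (w : ℕ → ℚ)
    (hw : ∀ i, 1 ≤ i → i ≤ n → 0 < w i ∧ w i < 1)
    (hwsum : ∑ i ∈ Finset.Icc 1 n, w i = 1)
    (X : ℚ) (hX : X = (∑ i ∈ Finset.Icc 1 n, (χ i : ℚ)) - ((n : ℚ) - 1) * (r : ℚ))
    (h1 : (χ 1 : ℚ) ≤ w 1 * X + (k 1 : ℚ))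
    (hlast : (χ n : ℚ) ≤ w n * X + (r : ℚ))
    (hmid : ∀ l, 2 ≤ l → l ≤ n - 1 → (χ l : ℚ) ≤ w l * X + (r : ℚ) + (k l : ℚ)) :
    ∀ j, 1 ≤ j → j ≤ n - 1 →
      ((∑ i ∈ Finset.Icc 1 j, w i) * X - (∑ i ∈ Finset.Icc 1 (j - 1), (χ i : ℚ))
          - (∑ i ∈ Finset.Icc (j + 1) (n - 1), (k i : ℚ)) + ((j : ℚ) - 1) * (r : ℚ)
        ≤ (χ j : ℚ)) ∧
      ((χ j : ℚ) ≤ (∑ i ∈ Finset.Icc 1 j, w i) * X - (∑ i ∈ Finset.Icc 1 (j - 1), (χ i : ℚ))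
          + (∑ i ∈ Finset.Icc 1 j, (k i : ℚ)) + ((j : ℚ) - 1) * (r : ℚ)) :=
  stmt_0_general n r χ k w hwsum X hX h1 hlast hmid
end

section
/- Let n ≥ 2 and r ≥ 1 be integers, let χ_1, …, χ_n be integers, let k_1, …, k_{n−1} be integers, and let w_1, …, w_n be rational numbers with 0 < w_i < 1 for each i and Σ_{i=1}^n w_i = 1. Set χ = Σ_{i=1}^n χ_i − (n−1)r. Assume (as rational numbers) the strict inequalities: χ_1 < w_1·χ + k_1, χ_n < w_n·χ + r, and χ_l < w_l·χ + r + k_l for every l with 2 ≤ l ≤ n−1. Then for every j with 1 ≤ j ≤ n−1 one has the strict inequalities (Σ_{i=1}^j w_i)·χ − Σ_{i=1}^{j−1} χ_i − Σ_{i=j+1}^{n−1} k_i + (j−1)r < χ_j < (Σ_{i=1}^j w_i)·χ − Σ_{i=1}^{j−1} χ_i + Σ_{i=1}^j k_i + (j−1)r. -/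
/-!
Summing the slope inequalities over the first `j` components gives the upper bound on
`χ_1 + ⋯ + χ_j`; summing them over the last `n - j` components bounds `χ_{j+1} + ⋯ + χ_n`,
and since `χ_1 + ⋯ + χ_n = χ + (n - 1) r` and the weights add up to `1`, this is the lower
bound.
-/

open Finset

namespace Finset

theorem sum_Icc_consecutive {M : Type*} [AddCommMonoid M] (f : ℕ → M) {a b c : ℕ}
    (hab : a ≤ b + 1) (hbc : b ≤ c) :
    ∑ i ∈ Icc a b, f i + ∑ i ∈ Icc (b + 1) c, f i = ∑ i ∈ Icc a c, f i := by
  simpa only [← Ico_add_one_right_eq_Icc] using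
    sum_Ico_consecutive f hab (by omega : b + 1 ≤ c + 1)

variable {K : Type*} [Field K] [LinearOrder K] [IsStrictOrderedRing K]

theorem sum_Icc_le_sum_add_mul {f g : ℕ → K} {c : K} {a b : ℕ} (hab : a ≤ b + 1)
    (h : ∀ i ∈ Icc a b, f i ≤ g i + c) :
    ∑ i ∈ Icc a b, f i ≤ ∑ i ∈ Icc a b, g i + ((b : K) + 1 - a) * c := by
  calc ∑ i ∈ Icc a b, f i ≤ ∑ i ∈ Icc a b, (g i + c) := sum_le_sum h
    _ = ∑ i ∈ Icc a b, g i + ((b : K) + 1 - a) * c := by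
      rw [sum_add_distrib, sum_const, Nat.card_Icc, nsmul_eq_mul, Nat.cast_sub hab,
        Nat.cast_add, Nat.cast_one]

theorem sum_Icc_one_lt_sum_add_mul {f g : ℕ → K} {c : K} {j : ℕ} (hj : 1 ≤ j)
    (h₁ : f 1 < g 1) (h : ∀ i ∈ Icc 2 j, f i ≤ g i + c) :
    ∑ i ∈ Icc 1 j, f i < ∑ i ∈ Icc 1 j, g i + ((j : K) - 1) * c := by
  have hrest := sum_Icc_le_sum_add_mul (by omega) h
  have hsplit : Icc 1 j = insert 1 (Icc 2 j) := (insert_Icc_add_one_left_eq_Icc hj).symm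
  rw [hsplit, sum_insert (by simp), sum_insert (by simp)]
  push_cast at hrest
  linarith

theorem sum_Icc_lt_sum_add_sum_add_mul {f g h : ℕ → K} {c : K} {a b : ℕ} (hb₀ : 0 < b)
    (hab : a ≤ b) (hb : f b < g b + c) (hmid : ∀ i ∈ Icc a (b - 1), f i ≤ g i + h i + c) :
    ∑ i ∈ Icc a b, f i <
      ∑ i ∈ Icc a b, g i + ∑ i ∈ Icc a (b - 1), h i + ((b : K) + 1 - a) * c := by
  have hrest := sum_Icc_le_sum_add_mul (g := fun i ↦ g i + h i) (by omega) hmid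
  rw [sum_add_distrib, Nat.cast_pred hb₀] at hrest
  have hb_notMem : b ∉ Icc a (b - 1) := by simp only [mem_Icc]; omega
  rw [← insert_Icc_sub_one_right_eq_Icc hab, sum_insert hb_notMem, sum_insert hb_notMem]
  linarith

end Finset

theorem stmt_1_general (n : ℕ) (r : ℤ)
    (χ k : ℕ → ℤ) (w : ℕ → ℚ)
    (hwsum : ∑ i ∈ Finset.Icc 1 n, w i = 1)
    (X : ℚ) (hX : X = (∑ i ∈ Finset.Icc 1 n, (χ i : ℚ)) - ((n : ℚ) - 1) * (r : ℚ))
    (h1 : (χ 1 : ℚ) < w 1 * X + (k 1 : ℚ))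
    (hlast : (χ n : ℚ) < w n * X + (r : ℚ))
    (hmid : ∀ l, 2 ≤ l → l ≤ n - 1 → (χ l : ℚ) < w l * X + (r : ℚ) + (k l : ℚ)) :
    ∀ j, 1 ≤ j → j ≤ n - 1 →
      ((∑ i ∈ Finset.Icc 1 j, w i) * X - (∑ i ∈ Finset.Icc 1 (j - 1), (χ i : ℚ))
          - (∑ i ∈ Finset.Icc (j + 1) (n - 1), (k i : ℚ)) + ((j : ℚ) - 1) * (r : ℚ)
        < (χ j : ℚ)) ∧
      ((χ j : ℚ) < (∑ i ∈ Finset.Icc 1 j, w i) * X - (∑ i ∈ Finset.Icc 1 (j - 1), (χ i : ℚ))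
          + (∑ i ∈ Finset.Icc 1 j, (k i : ℚ)) + ((j : ℚ) - 1) * (r : ℚ)) := by
  intro j hj1 hjn
  have hhead := sum_Icc_one_lt_sum_add_mul (f := fun i ↦ (χ i : ℚ))
    (g := fun i ↦ w i * X + k i) (c := r) hj1 h1 fun l hl ↦ by
      obtain ⟨hl₁, hl₂⟩ := mem_Icc.1 hl
      linarith [hmid l hl₁ (by omega)]
  have htail := sum_Icc_lt_sum_add_sum_add_mul (f := fun i ↦ (χ i : ℚ))
    (g := fun i ↦ w i * X) (h := fun i ↦ (k i : ℚ)) (c := r) (a := j + 1) (b := n)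
    (by omega) (by omega) hlast fun l hl ↦ by
      obtain ⟨hl₁, hl₂⟩ := mem_Icc.1 hl
      linarith [hmid l (by omega) hl₂]
  rw [sum_add_distrib, ← sum_mul] at hhead
  rw [← sum_mul] at htail
  have hχ := sum_Icc_consecutive (fun i ↦ (χ i : ℚ)) (by omega : 1 ≤ j + 1)
    (by omega : j ≤ n)
  have hw := sum_Icc_consecutive w (by omega : 1 ≤ j + 1) (by omega : j ≤ n)
  have hχj : ∑ i ∈ Icc 1 j, (χ i : ℚ) = ∑ i ∈ Icc 1 (j - 1), (χ i : ℚ) + χ j := by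
    have hj_notMem : j ∉ Icc 1 (j - 1) := by simp only [mem_Icc]; omega
    rw [← insert_Icc_sub_one_right_eq_Icc hj1, sum_insert hj_notMem, add_comm]
  have hwX : (∑ i ∈ Icc (j + 1) n, w i) * X = X - (∑ i ∈ Icc 1 j, w i) * X := by
    linear_combination X * hw + X * hwsum
  push_cast at htail
  constructor <;> linarith

/-- Arithmetic core of Theorem 3.5 (stable version): the strict slope inequalities
`μ_w(K̃_i) < μ_w(E)` imply the strict bounds on each `χ_j`. -/
theorem stmt_1 (n : ℕ) (r : ℤ) (hn : 2 ≤ n) (hr : 1 ≤ r)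
    (χ k : ℕ → ℤ) (w : ℕ → ℚ)
    (hw : ∀ i, 1 ≤ i → i ≤ n → 0 < w i ∧ w i < 1)
    (hwsum : ∑ i ∈ Finset.Icc 1 n, w i = 1)
    (X : ℚ) (hX : X = (∑ i ∈ Finset.Icc 1 n, (χ i : ℚ)) - ((n : ℚ) - 1) * (r : ℚ))
    (h1 : (χ 1 : ℚ) < w 1 * X + (k 1 : ℚ))
    (hlast : (χ n : ℚ) < w n * X + (r : ℚ))
    (hmid : ∀ l, 2 ≤ l → l ≤ n - 1 → (χ l : ℚ) < w l * X + (r : ℚ) + (k l : ℚ)) :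
    ∀ j, 1 ≤ j → j ≤ n - 1 →
      ((∑ i ∈ Finset.Icc 1 j, w i) * X - (∑ i ∈ Finset.Icc 1 (j - 1), (χ i : ℚ))
          - (∑ i ∈ Finset.Icc (j + 1) (n - 1), (k i : ℚ)) + ((j : ℚ) - 1) * (r : ℚ)
        < (χ j : ℚ)) ∧
      ((χ j : ℚ) < (∑ i ∈ Finset.Icc 1 j, w i) * X - (∑ i ∈ Finset.Icc 1 (j - 1), (χ i : ℚ))
          + (∑ i ∈ Finset.Icc 1 j, (k i : ℚ)) + ((j : ℚ) - 1) * (r : ℚ)) :=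
  stmt_1_general n r χ k w hwsum X hX h1 hlast hmid
end

section
/- Fix integers n ≥ 2 and r ≥ 2, and let χ_1, …, χ_n be integers such that for every nonempty subset I ⊆ {1, …, n} one has Σ_{i∈I} χ_i > (|I|−1)r, where |I| is the cardinality of I. Set χ = Σ_{i=1}^n χ_i − (n−1)r (so χ > 0). Then there exist rational numbers w_1, …, w_n with 0 < w_i < 1 for each i and Σ_{i=1}^n w_i = 1 such that for every j with 1 ≤ j ≤ n−1, (Σ_{i=1}^j w_i)·χ − Σ_{i=1}^{j−1} χ_i + r(j−1) < χ_j < (Σ_{i=1}^j w_i)·χ − Σ_{i=1}^{j−1} χ_i + rj (inequalities of rational numbers). -/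
/-!
Write `S_j = χ_1 + ⋯ + χ_j` and `W_j = w_1 + ⋯ + w_j`. The semistability inequalities say exactly
that `W_j χ` lies in the open interval `(S_j - r j, S_j - r (j - 1))`, so a polarization is the
same as a strictly increasing sequence `y_j = W_j χ` from `y_0 = 0` to `y_n = χ` through these
intervals. The subset hypothesis for `I = {i+1, …, j}` reads `S_i - r i < S_j - r (j - 1)` for
`i < j ≤ n`: every lower endpoint lies below every later upper endpoint, and then the running
maximum of the lower endpoints (an integer below every later upper endpoint), shifted by
`j / n ∈ [0, 1)` to make it strict, is such a sequence.
-/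

open Finset

theorem Finset.sum_Icc_one_sub_pred {M : Type*} [AddCommGroup M] (f : ℕ → M) (j : ℕ) :
    ∑ i ∈ Icc 1 j, (f i - f (i - 1)) = f j - f 0 := by
  induction j with
  | zero => simp
  | succ k ih => rw [sum_Icc_succ_top (by omega), ih, Nat.add_sub_cancel, sub_add_sub_cancel']

theorem Finset.sum_Icc_one_sub_sum_Icc_one {M : Type*} [AddCommGroup M] (f : ℕ → M) {i j : ℕ}
    (hij : i ≤ j) : ∑ k ∈ Icc 1 j, f k - ∑ k ∈ Icc 1 i, f k = ∑ k ∈ Ioc i j, f k := by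
  have hIoc (k : ℕ) : Icc 1 k = Ioc 0 k := Icc_add_one_left_eq_Ioc 0 k
  rw [hIoc, hIoc, sub_eq_iff_eq_add', sum_Ioc_consecutive f (Nat.zero_le i) hij]

theorem StrictMonoOn.sub_pred_mem_Ioo {α : Type*} [AddCommGroup α] [LinearOrder α]
    [IsOrderedAddMonoid α] {y : ℕ → α} {n i : ℕ} (hy : StrictMonoOn y (Set.Iic n)) (hn : 2 ≤ n)
    (hi : 1 ≤ i) (hin : i ≤ n) : y i - y (i - 1) ∈ Set.Ioo 0 (y n - y 0) := by
  constructor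
  · exact sub_pos.2 (hy (by simp only [Set.mem_Iic]; omega) (by simpa) (by omega))
  · rcases hin.lt_or_eq with hin | rfl
    · have hlt := hy (by simpa using hin.le) (by simp) hin
      have hle := hy.monotoneOn (by simp) (by simp only [Set.mem_Iic]; omega) (Nat.zero_le (i - 1))
      exact (sub_lt_sub_right hlt _).trans_le (sub_le_sub_left hle _)
    · exact sub_lt_sub_left (hy (by simp) (by simp only [Set.mem_Iic]; omega) (by omega)) _

theorem exists_strictMonoOn_between (a b : ℕ → ℤ) {n : ℕ} (hn : 0 < n)
    (hab : ∀ i j, i ≤ j → j ≤ n → a i < b j) :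
    ∃ y : ℕ → ℚ, StrictMonoOn y (Set.Iic n) ∧ y 0 = a 0 ∧ y n = b n ∧
      ∀ j, 0 < j → j < n → a j < y j ∧ y j < b j := by
  set c := partialSups a
  have hcb : ∀ j k, j ≤ k → k ≤ n → (c j : ℚ) + 1 ≤ b k := fun j k hjk hkn => by
    have := partialSups_le a j (b k - 1) fun i hi => by linarith [hab i k (hi.trans hjk) hkn]
    exact_mod_cast (by linarith : c j + 1 ≤ b k)
  have hnQ : (0 : ℚ) < n := by exact_mod_cast hn
  have hfrac : ∀ j < n, (j : ℚ) / n < 1 := fun j hj => by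
    rw [div_lt_one hnQ]; exact_mod_cast hj
  refine ⟨fun j => if j < n then c j + j / n else b n, ?_, by simp [hn, c], by simp, ?_⟩
  · intro i hi j hj hij
    simp only [Set.mem_Iic] at hi hj
    have hin : i < n := hij.trans_le hj
    simp only [hin, if_true]
    rcases hj.lt_or_eq with hjn | rfl
    · simp only [hjn, if_true]
      have hc : (c i : ℚ) ≤ c j := by exact_mod_cast c.monotone hij.le
      have hdiv : (i : ℚ) / n < j / n := div_lt_div_of_pos_right (by exact_mod_cast hij) hnQ
      linarith
    · simp only [lt_irrefl, if_false]
      linarith [hcb i j hin.le le_rfl, hfrac i hin]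
  · intro j hj hjn
    simp only [hjn, if_true]
    have haj : (a j : ℚ) ≤ c j := by exact_mod_cast le_partialSups a j
    have hpos : (0 : ℚ) < j / n := by positivity
    constructor <;> linarith [hcb j j le_rfl hjn.le, hfrac j hjn]

theorem sum_Icc_sub_mul_lt_of_subset_sum_gt {n : ℕ} {r : ℤ} {χ : ℕ → ℤ}
    (hsub : ∀ I : Finset ℕ, I ⊆ Icc 1 n → I.Nonempty → ((I.card : ℤ) - 1) * r < ∑ i ∈ I, χ i)
    {i j : ℕ} (hij : i < j) (hjn : j ≤ n) :
    ∑ k ∈ Icc 1 i, χ k - r * i < ∑ k ∈ Icc 1 j, χ k - r * ((j : ℤ) - 1) := by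
  have hI := hsub (Ioc i j) (fun k hk => by simp only [mem_Ioc, mem_Icc] at hk ⊢; omega)
    (nonempty_Ioc.2 hij)
  rw [Nat.card_Ioc, Nat.cast_sub hij.le, ← sum_Icc_one_sub_sum_Icc_one χ hij.le] at hI
  linarith

/-- Case 3 (χ > 0) of Theorem 5.1: if `∑_{i∈I} χ_i > (|I|-1)r` for every nonempty
subset `I ⊆ {1,…,n}`, then there exists a polarization satisfying the
semistability inequalities. -/
theorem stmt_4 (n : ℕ) (r : ℤ) (hn : 2 ≤ n) (hr : 2 ≤ r)
    (χ : ℕ → ℤ)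
    (hsub : ∀ I : Finset ℕ, I ⊆ Finset.Icc 1 n → I.Nonempty →
      ((I.card : ℤ) - 1) * r < ∑ i ∈ I, χ i)
    (X : ℚ) (hX : X = (∑ i ∈ Finset.Icc 1 n, (χ i : ℚ)) - ((n : ℚ) - 1) * (r : ℚ)) :
    ∃ w : ℕ → ℚ,
      (∀ i, 1 ≤ i → i ≤ n → 0 < w i ∧ w i < 1) ∧
      (∑ i ∈ Finset.Icc 1 n, w i = 1) ∧
      (∀ j, 1 ≤ j → j ≤ n - 1 →
        ((∑ i ∈ Finset.Icc 1 j, w i) * X - (∑ i ∈ Finset.Icc 1 (j - 1), (χ i : ℚ))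
            + (r : ℚ) * ((j : ℚ) - 1) < (χ j : ℚ)) ∧
        ((χ j : ℚ) < (∑ i ∈ Finset.Icc 1 j, w i) * X - (∑ i ∈ Finset.Icc 1 (j - 1), (χ i : ℚ))
            + (r : ℚ) * (j : ℚ))) := by
  set a : ℕ → ℤ := fun j => ∑ k ∈ Icc 1 j, χ k - r * j
  set b : ℕ → ℤ := fun j => ∑ k ∈ Icc 1 j, χ k - r * ((j : ℤ) - 1)
  have hab : ∀ i j, i ≤ j → j ≤ n → a i < b j := fun i j hij hjn => by
    rcases hij.lt_or_eq with hij | rfl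
    · exact sum_Icc_sub_mul_lt_of_subset_sum_gt hsub hij hjn
    · simp only [a, b]; linarith
  obtain ⟨y, hy, hy0, hyn, hyab⟩ := exists_strictMonoOn_between a b (by omega) hab
  replace hy0 : y 0 = 0 := by simp [hy0, a]
  have hXy : X = y n := by rw [hX, hyn]; push_cast [b]; ring
  have hXpos : 0 < X := hXy ▸ hy0 ▸ hy (by simp) (by simp) (by omega)
  have hW (j : ℕ) : ∑ i ∈ Icc 1 j, (y i - y (i - 1)) / X = y j / X := by
    rw [← sum_div, sum_Icc_one_sub_pred, hy0, sub_zero]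
  refine ⟨fun i => (y i - y (i - 1)) / X, fun i hi hin => ?_, ?_, fun j hj hjn => ?_⟩
  · obtain ⟨hpos, hlt⟩ := hy.sub_pred_mem_Ioo hn hi hin
    rw [hy0, sub_zero, ← hXy] at hlt
    exact ⟨div_pos hpos hXpos, (div_lt_one hXpos).2 hlt⟩
  · rw [hW, ← hXy, div_self hXpos.ne']
  · obtain ⟨k, rfl⟩ : ∃ k, j = k + 1 := ⟨j - 1, by omega⟩
    obtain ⟨hlo, hhi⟩ := hyab (k + 1) hj (by omega)
    simp only [a, b, sum_Icc_succ_top (Nat.le_add_left 1 k)] at hlo hhi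
    rw [hW, div_mul_cancel₀ _ hXpos.ne', Nat.add_sub_cancel]
    push_cast at hlo hhi ⊢
    constructor <;> linarith
end
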